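/- arXiv:math/9802055 — 4 statements merged into one kernel-verified Lean document; each statement's English description precedes it below -/
import Mathlib

section
/- Let U and V be real Banach spaces and let T : U → V be a bounded linear operator whose kernel is finite-dimensional and whose range is closed and of finite codimension in V. Let W ⊆ U be a closed subspace of finite codimension such that finrank(U/W) + finrank(V/range T) = finrank(ker T), and suppose there is a constant C > 0 such that ‖T x‖ ≥ C ‖x‖ for every x ∈ W. Then T maps W bijectively onto V; in particular, for every v ∈ V there is a unique w ∈ W with T w = v, and this w satisfies ‖w‖ ≤ C⁻¹ ‖v‖. -/
/-!
The lower bound makes `T` injective on `W`, so `ker T` embeds into `U ⧸ W` and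
`dim ker T ≤ codim W`. The index condition then forces `codim (range T) = 0` and
`dim ker T = codim W`, so `ker T` is a complement of `W`: hence `T W = T U = V`.
-/

open Module Submodule

section LinearAlgebra

variable {K M N : Type*} [DivisionRing K] [AddCommGroup M] [Module K M]
  [AddCommGroup N] [Module K N]

theorem Submodule.injective_mkQ_comp_subtype {p q : Submodule K M} (h : Disjoint p q) :
    Function.Injective (q.mkQ ∘ₗ p.subtype) := by
  rw [← LinearMap.ker_eq_bot, LinearMap.ker_comp, ker_mkQ, ← disjoint_iff_comap_eq_bot]
  exact h

theorem Submodule.finrank_le_finrank_quotient_of_disjoint {p q : Submodule K M}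
    [FiniteDimensional K (M ⧸ q)] (h : Disjoint p q) : finrank K p ≤ finrank K (M ⧸ q) :=
  LinearMap.finrank_le_finrank_of_injective (injective_mkQ_comp_subtype h)

theorem Submodule.codisjoint_of_disjoint_of_finrank_quotient_le {p q : Submodule K M}
    [FiniteDimensional K (M ⧸ q)] (h : Disjoint p q) (hle : finrank K (M ⧸ q) ≤ finrank K p) :
    Codisjoint p q := by
  have hinj := injective_mkQ_comp_subtype h
  have : FiniteDimensional K p := Module.Finite.of_injective _ hinj
  have hsurj : Function.Surjective (q.mkQ ∘ₗ p.subtype) :=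
    (LinearMap.injective_iff_surjective_of_finrank_eq_finrank
      (le_antisymm (finrank_le_finrank_quotient_of_disjoint h) hle)).mp hinj
  rw [← LinearMap.range_eq_top, LinearMap.range_comp, range_subtype, map_mkQ_eq_top] at hsurj
  exact codisjoint_iff.mpr (sup_comm p q ▸ hsurj)

theorem LinearMap.map_eq_top_of_disjoint_ker_of_finrank_add_eq (f : M →ₗ[K] N)
    {W : Submodule K M} [FiniteDimensional K (M ⧸ W)] [FiniteDimensional K (N ⧸ range f)]
    (hdisj : Disjoint W (ker f))
    (hindex : finrank K (M ⧸ W) + finrank K (N ⧸ range f) = finrank K (ker f)) :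
    W.map f = ⊤ := by
  have hker_le := finrank_le_finrank_quotient_of_disjoint hdisj.symm
  have hrange : range f = ⊤ := by
    rw [← Submodule.Quotient.subsingleton_iff, ← finrank_zero_iff (R := K)]
    omega
  have hcompl : Codisjoint W (ker f) :=
    (codisjoint_of_disjoint_of_finrank_quotient_le hdisj.symm (by omega)).symm
  rw [map_eq_range_iff.mpr hcompl, hrange]

end LinearAlgebra

theorem Submodule.disjoint_ker_of_mul_norm_le {R E F : Type*} [Semiring R]
    [NormedAddCommGroup E] [Module R E] [SeminormedAddCommGroup F] [Module R F]
    (T : E →ₗ[R] F) {W : Submodule R E} {C : ℝ} (hC : 0 < C)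
    (hbound : ∀ x ∈ W, C * ‖x‖ ≤ ‖T x‖) : Disjoint W (LinearMap.ker T) := by
  refine disjoint_def.mpr fun x hxW hxT => norm_le_zero_iff.mp ?_
  have := hbound x hxW
  rw [LinearMap.mem_ker.mp hxT, norm_zero] at this
  nlinarith [norm_nonneg x]

theorem gluing_linear_step_general
    {U V : Type*} [NormedAddCommGroup U] [NormedSpace ℝ U]
    [NormedAddCommGroup V] [NormedSpace ℝ V]
    (T : U →L[ℝ] V)
    (hcoker : FiniteDimensional ℝ (V ⧸ LinearMap.range (T : U →ₗ[ℝ] V)))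
    (W : Submodule ℝ U)
    (hWcodim : FiniteDimensional ℝ (U ⧸ W))
    (hindex : Module.finrank ℝ (U ⧸ W) + Module.finrank ℝ (V ⧸ LinearMap.range (T : U →ₗ[ℝ] V))
      = Module.finrank ℝ (LinearMap.ker (T : U →ₗ[ℝ] V)))
    (C : ℝ) (hC : 0 < C)
    (hbound : ∀ x ∈ W, C * ‖x‖ ≤ ‖T x‖) :
    ∀ v : V, ∃ w : U, w ∈ W ∧ T w = v ∧ ‖w‖ ≤ C⁻¹ * ‖v‖ ∧
      ∀ w' ∈ W, T w' = v → w' = w := by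
  have hdisj := disjoint_ker_of_mul_norm_le (T : U →ₗ[ℝ] V) hC hbound
  have hmap := LinearMap.map_eq_top_of_disjoint_ker_of_finrank_add_eq _ hdisj hindex
  intro v
  obtain ⟨w, hwW, rfl⟩ : v ∈ W.map (T : U →ₗ[ℝ] V) := hmap ▸ mem_top
  refine ⟨w, hwW, rfl, (le_inv_mul_iff₀ hC).mpr (hbound w hwW), fun w' hw'W hw'T => ?_⟩
  exact LinearMap.injOn_of_disjoint_ker le_rfl hdisj hw'W hwW hw'T

/-- If `T : U → V` is a bounded linear operator between real Banach
spaces with finite-dimensional kernel and closed range of finite codimension, and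
`W ⊆ U` is a closed subspace of finite codimension whose codimension matches the
index of `T` (i.e. `codim W + codim (range T) = dim (ker T)`), and `‖T x‖ ≥ C ‖x‖`
on `W` for some `C > 0`, then `T` maps `W` bijectively onto `V`, with the unique
preimage `w ∈ W` of each `v` satisfying `‖w‖ ≤ C⁻¹ ‖v‖`. -/
theorem gluing_linear_step
    {U V : Type*} [NormedAddCommGroup U] [NormedSpace ℝ U] [CompleteSpace U]
    [NormedAddCommGroup V] [NormedSpace ℝ V] [CompleteSpace V]
    (T : U →L[ℝ] V)
    (hker : FiniteDimensional ℝ (LinearMap.ker (T : U →ₗ[ℝ] V)))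
    (hrange : IsClosed (LinearMap.range (T : U →ₗ[ℝ] V) : Set V))
    (hcoker : FiniteDimensional ℝ (V ⧸ LinearMap.range (T : U →ₗ[ℝ] V)))
    (W : Submodule ℝ U) (hWclosed : IsClosed (W : Set U))
    (hWcodim : FiniteDimensional ℝ (U ⧸ W))
    (hindex : Module.finrank ℝ (U ⧸ W) + Module.finrank ℝ (V ⧸ LinearMap.range (T : U →ₗ[ℝ] V))
      = Module.finrank ℝ (LinearMap.ker (T : U →ₗ[ℝ] V)))
    (C : ℝ) (hC : 0 < C)
    (hbound : ∀ x ∈ W, C * ‖x‖ ≤ ‖T x‖) :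
    ∀ v : V, ∃ w : U, w ∈ W ∧ T w = v ∧ ‖w‖ ≤ C⁻¹ * ‖v‖ ∧
      ∀ w' ∈ W, T w' = v → w' = w :=
  gluing_linear_step_general T hcoker W hWcodim hindex C hC hbound
end

section
/- Let U and V be real Banach spaces, let D : U → V be a bounded linear operator, and let G : V → U be a bounded linear operator with D ∘ G = id_V and ‖G‖ ≤ k for some k > 0. Let N : U → V be a map with N(0) = 0 satisfying the quadratic estimate ‖N(x) − N(y)‖ ≤ M (‖x‖ + ‖y‖) ‖x − y‖ for all x, y ∈ U, for some constant M > 0. Then for every e ∈ V with ‖e‖ ≤ 1/(10 M k²) there exists u ∈ U with D u + N(u) = e and ‖u‖ ≤ 2 k ‖e‖. -/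
set_option maxHeartbeats 1000000 in
/-- (Implicit function theorem / perturbation lemma.) If `D : U → V`
is a bounded linear operator between real Banach spaces with a bounded right inverse
`G` of norm at most `k > 0`, and `N : U → V` satisfies `N 0 = 0` together with the
quadratic estimate `‖N x − N y‖ ≤ M (‖x‖ + ‖y‖) ‖x − y‖`, then for every `e` with
`‖e‖ ≤ 1/(10 M k²)` there is a solution `u` of `D u + N u = e` with `‖u‖ ≤ 2 k ‖e‖`. -/
theorem ift_perturbation
    {U V : Type*} [NormedAddCommGroup U] [NormedSpace ℝ U] [CompleteSpace U]
    [NormedAddCommGroup V] [NormedSpace ℝ V] [CompleteSpace V]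
    (D : U →L[ℝ] V) (G : V →L[ℝ] U)
    (hDG : D.comp G = ContinuousLinearMap.id ℝ V)
    (k : ℝ) (hk : 0 < k) (hG : ‖G‖ ≤ k)
    (N : U → V) (hN0 : N 0 = 0)
    (M : ℝ) (hM : 0 < M)
    (hquad : ∀ x y : U, ‖N x - N y‖ ≤ M * (‖x‖ + ‖y‖) * ‖x - y‖) :
    ∀ e : V, ‖e‖ ≤ 1 / (10 * M * k ^ 2) →
      ∃ u : U, D u + N u = e ∧ ‖u‖ ≤ 2 * k * ‖e‖ := by
  intro e he
  have hMk : (0:ℝ) < 10 * M * k ^ 2 := by positivity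
  have key : ‖e‖ * (10 * M * k ^ 2) ≤ 1 := by
    rw [← le_div_iff₀ hMk]; exact he
  set r := 2 * k * ‖e‖ with hr
  have hr0 : 0 ≤ r := by positivity
  have hNb : ∀ u : U, ‖N u‖ ≤ M * ‖u‖ ^ 2 := by
    intro u
    have := hquad u 0
    simpa [hN0, sq, mul_assoc] using this
  have hGnorm : ∀ v : V, ‖G v‖ ≤ k * ‖v‖ := fun v =>
    (G.le_opNorm v).trans (mul_le_mul_of_nonneg_right hG (norm_nonneg v))
  set S := Metric.closedBall (0:U) r with hS
  have hSc : IsClosed S := Metric.isClosed_closedBall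
  haveI : CompleteSpace S := hSc.completeSpace_coe
  haveI : Nonempty S := ⟨⟨0, Metric.mem_closedBall_self hr0⟩⟩
  have hmem : ∀ u : U, u ∈ S → G (e - N u) ∈ S := by
    intro u hu
    have hu' : ‖u‖ ≤ r := by
      simpa [hS, Metric.mem_closedBall, dist_eq_norm] using hu
    have h1 : ‖G (e - N u)‖ ≤ k * (‖e‖ + M * ‖u‖ ^ 2) := by
      refine (hGnorm _).trans ?_
      have h0 : ‖e - N u‖ ≤ ‖e‖ + ‖N u‖ := norm_sub_le _ _
      have h2 := hNb u
      nlinarith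
    have hu2 : ‖u‖ ^ 2 ≤ r ^ 2 := by nlinarith [norm_nonneg u]
    have h2 : M * ‖u‖ ^ 2 ≤ M * r ^ 2 := by nlinarith
    have h3 : M * r ^ 2 ≤ (2/5) * ‖e‖ := by
      rw [hr]
      nlinarith [mul_nonneg (norm_nonneg e) (sub_nonneg.mpr key), norm_nonneg e]
    have h4 : k * (‖e‖ + M * ‖u‖ ^ 2) ≤ k * (‖e‖ + (2/5) * ‖e‖) := by
      have := h2.trans h3
      nlinarith
    have hnorm : ‖G (e - N u)‖ ≤ r := by
      rw [hr]; nlinarith [norm_nonneg e]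
    simpa [hS, Metric.mem_closedBall, dist_eq_norm] using hnorm
  set f : S → S := fun u => ⟨G (e - N u.1), hmem _ u.2⟩ with hf
  have hc : ContractingWith (2/5 : NNReal) f := by
    constructor
    · rw [← NNReal.coe_lt_coe]; norm_num
    · refine LipschitzWith.of_dist_le_mul fun x y => ?_
      have hx : ‖x.1‖ ≤ r := mem_closedBall_zero_iff.mp x.2
      have hy : ‖y.1‖ ≤ r := mem_closedBall_zero_iff.mp y.2
      have hdist : dist (f x) (f y) = ‖G (e - N x.1) - G (e - N y.1)‖ := by
        rw [hf]; simp [Subtype.dist_eq, dist_eq_norm]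
      have hGlin : G (e - N x.1) - G (e - N y.1) = G (N y.1 - N x.1) := by
        rw [← map_sub]; congr 1; abel
      have h3 : ‖G (N y.1 - N x.1)‖ ≤ k * (M * (‖y.1‖ + ‖x.1‖) * ‖y.1 - x.1‖) :=
        (hGnorm _).trans (mul_le_mul_of_nonneg_left (hquad _ _) hk.le)
      have hd : dist x y = ‖x.1 - y.1‖ := by rw [Subtype.dist_eq, dist_eq_norm]
      have hnn : ‖y.1 - x.1‖ = ‖x.1 - y.1‖ := by rw [norm_sub_rev]
      rw [hdist, hGlin, hd]
      have hcoe : ((2/5 : NNReal) : ℝ) = 2/5 := by norm_num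
      rw [hcoe]
      rw [hnn] at h3
      have hbound : k * (M * (‖y.1‖ + ‖x.1‖) * ‖x.1 - y.1‖)
          ≤ k * M * (2 * r) * ‖x.1 - y.1‖ := by
        have hsum : ‖y.1‖ + ‖x.1‖ ≤ 2 * r := by linarith
        have h5 := mul_le_mul_of_nonneg_right
          (mul_le_mul_of_nonneg_left hsum (mul_nonneg hk.le hM.le))
          (norm_nonneg (x.1 - y.1))
        nlinarith [h5]
      have hkr : k * M * (2 * r) ≤ 2/5 := by
        rw [hr]; nlinarith
      have hfinal : k * M * (2 * r) * ‖x.1 - y.1‖ ≤ 2/5 * ‖x.1 - y.1‖ := by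
        nlinarith [norm_nonneg (x.1 - y.1)]
      linarith
  obtain ⟨u, hu⟩ : ∃ u : S, f u = u := ⟨hc.fixedPoint f, hc.fixedPoint_isFixedPt⟩
  have hueq : G (e - N u.1) = u.1 := congrArg Subtype.val hu
  refine ⟨u.1, ?_, ?_⟩
  · have hDGv : ∀ v : V, D (G v) = v := fun v => by
      rw [← ContinuousLinearMap.comp_apply, hDG]; rfl
    have hD := congrArg D hueq
    rw [hDGv] at hD
    rw [← hD]; abel
  · exact mem_closedBall_zero_iff.mp u.2
end

section
/- Let U and V be real Banach spaces, T : U → V a bounded linear operator, and W ⊆ U a closed subspace such that T maps W onto V and ‖T x‖ ≥ C ‖x‖ for all x ∈ W, for some constant C > 0. Let N : U → V be a map with N(0) = 0 satisfying the quadratic estimate ‖N(x) − N(y)‖ ≤ M (‖x‖ + ‖y‖) ‖x − y‖ for all x, y ∈ U, for some constant M > 0. Then for every e ∈ V with ‖e‖ ≤ C²/(10 M) there exists u ∈ W with T u + N(u) = e and ‖u‖ ≤ 2 C⁻¹ ‖e‖; moreover u is the unique solution of T u + N(u) = e among elements u ∈ W with ‖u‖ < C/(2M). -/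
/-! On `W`, `T` is a linear isomorphism onto `V` whose inverse `S` has norm at most `C⁻¹`.
Writing `u = S v` turns the equation into `v + N (S v) = e`, a perturbation of the identity
of `V` by a map with quadratic estimate constant `M / C²`. For `‖e‖ ≤ C² / (10 M)`,
`v ↦ e - N (S v)` maps the ball of radius `2 ‖e‖` into itself and is a `2/5`-contraction there,
so the Banach fixed point theorem solves it. Uniqueness: two solutions in `W` satisfy
`C ‖u - u'‖ ≤ ‖N u - N u'‖ ≤ M (‖u‖ + ‖u'‖) ‖u - u'‖`, and the smallness of `u, u'` makes the
factor `M (‖u‖ + ‖u'‖)` less than `C`. -/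

open Metric Set

def QuadraticEstimate {E F : Type*} [NormedAddCommGroup E] [NormedAddCommGroup F] (N : E → F)
    (M : ℝ) : Prop :=
  ∀ x y, ‖N x - N y‖ ≤ M * (‖x‖ + ‖y‖) * ‖x - y‖

namespace QuadraticEstimate

variable {D E F : Type*} [NormedAddCommGroup D] [NormedAddCommGroup E] [NormedAddCommGroup F]
  {N : E → F} {M : ℝ}

theorem norm_le (hN : QuadraticEstimate N M) (hN0 : N 0 = 0) (x : E) : ‖N x‖ ≤ M * ‖x‖ ^ 2 := by
  simpa [hN0, sq, mul_assoc] using hN x 0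

theorem dist_le_of_mem_closedBall (hN : QuadraticEstimate N M) (hM : 0 ≤ M) {r : ℝ} {x y : E}
    (hx : x ∈ closedBall 0 r) (hy : y ∈ closedBall 0 r) :
    dist (N x) (N y) ≤ 2 * M * r * dist x y := by
  rw [mem_closedBall_zero_iff] at hx hy
  rw [dist_eq_norm, dist_eq_norm]
  calc ‖N x - N y‖ ≤ M * (‖x‖ + ‖y‖) * ‖x - y‖ := hN x y
    _ ≤ M * (2 * r) * ‖x - y‖ := by gcongr; linarith
    _ = 2 * M * r * ‖x - y‖ := by ring

theorem comp_linearMap {R : Type*} [Ring R] [Module R D] [Module R E]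
    (hN : QuadraticEstimate N M) (hM : 0 ≤ M) (S : D →ₗ[R] E) {K : ℝ} (hS : ∀ v, ‖S v‖ ≤ K * ‖v‖) :
    QuadraticEstimate (N ∘ S) (M * K ^ 2) := by
  intro x y
  have hsum : ‖S x‖ + ‖S y‖ ≤ K * (‖x‖ + ‖y‖) := by linarith [hS x, hS y]
  calc ‖N (S x) - N (S y)‖ ≤ M * (‖S x‖ + ‖S y‖) * ‖S (x - y)‖ := by
        rw [map_sub]; exact hN _ _
    _ ≤ M * (K * (‖x‖ + ‖y‖)) * (K * ‖x - y‖) := by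
        gcongr M * ?_ * ?_
        · exact mul_nonneg hM ((add_nonneg (norm_nonneg _) (norm_nonneg _)).trans hsum)
        · exact hS _
    _ = M * K ^ 2 * (‖x‖ + ‖y‖) * ‖x - y‖ := by ring

end QuadraticEstimate

theorem exists_add_eq_of_quadraticEstimate {E : Type*} [NormedAddCommGroup E] [CompleteSpace E]
    {G : E → E} {L : ℝ} (hG : QuadraticEstimate G L) (hG0 : G 0 = 0) (hL : 0 ≤ L) {e : E}
    (he : 10 * L * ‖e‖ ≤ 1) : ∃ v, v + G v = e ∧ ‖v‖ ≤ 2 * ‖e‖ := by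
  set s := closedBall (0 : E) (2 * ‖e‖)
  have hmaps : MapsTo (fun v ↦ e - G v) s s := by
    intro v hv
    rw [mem_closedBall_zero_iff] at hv ⊢
    calc ‖e - G v‖ ≤ ‖e‖ + L * ‖v‖ ^ 2 :=
          (norm_sub_le _ _).trans (by gcongr; exact hG.norm_le hG0 v)
      _ ≤ ‖e‖ + L * (2 * ‖e‖) ^ 2 := by gcongr
      _ ≤ 2 * ‖e‖ := by nlinarith [norm_nonneg e]
  have hlip : LipschitzOnWith (2 / 5) (fun v ↦ e - G v) s := by
    refine LipschitzOnWith.of_dist_le_mul fun v hv w hw ↦ ?_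
    calc dist (e - G v) (e - G w) = dist (G v) (G w) := dist_sub_left _ _ _
      _ ≤ 2 * L * (2 * ‖e‖) * dist v w := hG.dist_le_of_mem_closedBall hL hv hw
      _ ≤ 2 / 5 * dist v w := by gcongr; linarith
      _ = ((2 / 5 : NNReal) : ℝ) * dist v w := by norm_num
  have hcontr : ContractingWith (2 / 5) (hmaps.restrict _ s s) :=
    ⟨by rw [← NNReal.coe_lt_one]; norm_num, hlip.mapsToRestrict hmaps⟩
  obtain ⟨v, hvs, hfix, -⟩ := hcontr.exists_fixedPoint' isClosed_closedBall.isComplete hmaps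
    (mem_closedBall_self (by positivity)) (edist_ne_top _ _)
  exact ⟨v, eq_sub_iff_add_eq.mp hfix.symm, mem_closedBall_zero_iff.mp hvs⟩

theorem LinearMap.exists_rightInverse_of_bounded_below {R U V : Type*} [Ring R]
    [NormedAddCommGroup U] [NormedAddCommGroup V] [Module R U] [Module R V]
    (T : U →ₗ[R] V) (W : Submodule R U) (hsurj : ∀ v, ∃ x ∈ W, T x = v) {C : ℝ} (hC : 0 < C)
    (hbound : ∀ x ∈ W, C * ‖x‖ ≤ ‖T x‖) :
    ∃ S : V →ₗ[R] U, (∀ v, S v ∈ W) ∧ (∀ v, T (S v) = v) ∧ ∀ v, ‖S v‖ ≤ C⁻¹ * ‖v‖ := by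
  have hinj : Function.Injective (T.domRestrict W) := by
    refine (injective_iff_map_eq_zero _).2 fun x hx ↦ ?_
    have hx_le := hbound x x.2
    rw [← domRestrict_apply, hx, norm_zero] at hx_le
    exact norm_le_zero_iff.mp (nonpos_of_mul_nonpos_right hx_le hC) |> Subtype.ext
  have hsurj' : Function.Surjective (T.domRestrict W) := fun v ↦
    let ⟨x, hx, hTx⟩ := hsurj v; ⟨⟨x, hx⟩, hTx⟩
  set Φ := LinearEquiv.ofBijective _ ⟨hinj, hsurj'⟩
  have hTS (v : V) : T (Φ.symm v) = v := Φ.apply_symm_apply v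
  refine ⟨W.subtype ∘ₗ Φ.symm.toLinearMap, fun v ↦ (Φ.symm v).2, hTS, fun v ↦ ?_⟩
  rw [le_inv_mul_iff₀ hC]
  simpa [hTS] using hbound _ (Φ.symm v).2

theorem QuadraticEstimate.eq_of_map_add_eq {R U V : Type*} [Ring R]
    [NormedAddCommGroup U] [NormedAddCommGroup V] [Module R U] [Module R V]
    {T : U →ₗ[R] V} {W : Submodule R U} {C : ℝ} (hbound : ∀ x ∈ W, C * ‖x‖ ≤ ‖T x‖)
    {N : U → V} {M : ℝ} (hN : QuadraticEstimate N M) {u u' : U} (hu : u ∈ W) (hu' : u' ∈ W)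
    (heq : T u + N u = T u' + N u') (hsmall : M * (‖u‖ + ‖u'‖) < C) : u = u' := by
  have hT : T (u - u') = N u' - N u := by
    rw [map_sub]; exact sub_eq_sub_iff_add_eq_add.mpr (by rw [heq, add_comm])
  have hle : C * ‖u - u'‖ ≤ M * (‖u‖ + ‖u'‖) * ‖u - u'‖ := by
    calc C * ‖u - u'‖ ≤ ‖N u' - N u‖ := hT ▸ hbound _ (W.sub_mem hu hu')
      _ ≤ M * (‖u‖ + ‖u'‖) * ‖u - u'‖ := by
        rw [norm_sub_rev u u', add_comm ‖u‖]; exact hN u' u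
  have hzero : ‖u - u'‖ = 0 := by nlinarith [norm_nonneg (u - u')]
  exact sub_eq_zero.mp (norm_eq_zero.mp hzero)

theorem main_estimate_ift_general
    {U V : Type*} [NormedAddCommGroup U] [NormedSpace ℝ U]
    [NormedAddCommGroup V] [NormedSpace ℝ V] [CompleteSpace V]
    (T : U →L[ℝ] V)
    (W : Submodule ℝ U)
    (hsurj : ∀ v : V, ∃ x ∈ W, T x = v)
    (C : ℝ) (hC : 0 < C)
    (hbound : ∀ x ∈ W, C * ‖x‖ ≤ ‖T x‖)
    (N : U → V) (hN0 : N 0 = 0)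
    (M : ℝ) (hM : 0 < M)
    (hquad : ∀ x y : U, ‖N x - N y‖ ≤ M * (‖x‖ + ‖y‖) * ‖x - y‖) :
    ∀ e : V, ‖e‖ ≤ C ^ 2 / (10 * M) →
      ∃ u ∈ W, T u + N u = e ∧ ‖u‖ ≤ 2 * C⁻¹ * ‖e‖ ∧
        ∀ u' ∈ W, ‖u'‖ < C / (2 * M) → T u' + N u' = e → u' = u := by
  intro e he
  have hN : QuadraticEstimate N M := hquad
  obtain ⟨S, hSW, hTS, hS⟩ :=
    (T : U →ₗ[ℝ] V).exists_rightInverse_of_bounded_below W hsurj hC hbound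
  replace hTS : ∀ v, T (S v) = v := hTS
  replace he : 10 * M * ‖e‖ ≤ C ^ 2 := by rw [le_div_iff₀ (by positivity)] at he; linarith
  obtain ⟨v, hv, hv_le⟩ := exists_add_eq_of_quadraticEstimate (hN.comp_linearMap hM.le S hS)
    (by simp [hN0]) (by positivity) (by field_simp; linarith)
  have hu : ‖S v‖ ≤ 2 * C⁻¹ * ‖e‖ := by
    calc ‖S v‖ ≤ C⁻¹ * ‖v‖ := hS v
      _ ≤ C⁻¹ * (2 * ‖e‖) := by gcongr
      _ = 2 * C⁻¹ * ‖e‖ := by ring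
  have hsol : T (S v) + N (S v) = e := by rw [hTS]; exact hv
  refine ⟨S v, hSW v, hsol, hu, fun u' hu'W hu' hu'e ↦ ?_⟩
  refine hN.eq_of_map_add_eq hbound hu'W (hSW v) (hu'e.trans hsol.symm) ?_
  have hMu : M * ‖S v‖ ≤ C / 5 := by
    calc M * ‖S v‖ ≤ M * (2 * C⁻¹ * ‖e‖) := by gcongr
      _ = 10 * M * ‖e‖ / (5 * C) := by field_simp; ring
      _ ≤ C ^ 2 / (5 * C) := by gcongr
      _ = C / 5 := by field_simp
  have hMu' : M * ‖u'‖ < C / 2 := by rw [lt_div_iff₀ (by positivity)] at hu'; linarith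
  linarith

/-- (Main estimate + implicit function theorem.) Let `T : U → V` be a
bounded linear operator between real Banach spaces, `W ⊆ U` a closed subspace mapped
onto `V` by `T` with `‖T x‖ ≥ C ‖x‖` on `W` (`C > 0`), and let `N : U → V` satisfy
`N 0 = 0` and the quadratic estimate with constant `M > 0`. Then for every `e` with
`‖e‖ ≤ C²/(10 M)` there is `u ∈ W` with `T u + N u = e` and `‖u‖ ≤ 2 C⁻¹ ‖e‖`, and `u`
is the unique such solution in `W` with norm `< C/(2M)`. -/
theorem main_estimate_ift
    {U V : Type*} [NormedAddCommGroup U] [NormedSpace ℝ U] [CompleteSpace U]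
    [NormedAddCommGroup V] [NormedSpace ℝ V] [CompleteSpace V]
    (T : U →L[ℝ] V)
    (W : Submodule ℝ U) (hWclosed : IsClosed (W : Set U))
    (hsurj : ∀ v : V, ∃ x ∈ W, T x = v)
    (C : ℝ) (hC : 0 < C)
    (hbound : ∀ x ∈ W, C * ‖x‖ ≤ ‖T x‖)
    (N : U → V) (hN0 : N 0 = 0)
    (M : ℝ) (hM : 0 < M)
    (hquad : ∀ x y : U, ‖N x - N y‖ ≤ M * (‖x‖ + ‖y‖) * ‖x - y‖) :
    ∀ e : V, ‖e‖ ≤ C ^ 2 / (10 * M) →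
      ∃ u ∈ W, T u + N u = e ∧ ‖u‖ ≤ 2 * C⁻¹ * ‖e‖ ∧
        ∀ u' ∈ W, ‖u'‖ < C / (2 * M) → T u' + N u' = e → u' = u :=
  main_estimate_ift_general T W hsurj C hC hbound N hN0 M hM hquad
end

section
/- Let H be a real Hilbert space, F ⊆ H a finite-dimensional subspace, and φ : F → H a linear map such that ‖φ(e) − e‖ ≤ ε ‖e‖ for all e ∈ F, where 0 ≤ ε < 1. Then F intersects the orthogonal complement of φ(F) trivially, and in fact H is the (internal) direct sum of F and the orthogonal complement of φ(F); that is, F and (φ(F))ᗮ are complementary subspaces of H. -/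
open scoped RealInnerProductSpace

/-- `‖x‖² = ⟪x - y, x⟫ ≤ ‖x - y‖ ‖x‖ ≤ ε ‖x‖²`, which forces `x = 0` since `ε < 1`. -/
theorem eq_zero_of_inner_eq_zero_of_norm_sub_le {E : Type*} [NormedAddCommGroup E]
    [InnerProductSpace ℝ E] {x y : E} {ε : ℝ} (hε : ε < 1) (hxy : ‖y - x‖ ≤ ε * ‖x‖)
    (horth : ⟪y, x⟫ = 0) : x = 0 := by
  have hsq : ‖x‖ ^ 2 ≤ ε * ‖x‖ ^ 2 :=
    calc ‖x‖ ^ 2 = ⟪x - y, x⟫ := by rw [inner_sub_left, horth, real_inner_self_eq_norm_sq, sub_zero]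
      _ ≤ ‖x - y‖ * ‖x‖ := real_inner_le_norm _ _
      _ ≤ ε * ‖x‖ * ‖x‖ := by rw [norm_sub_rev]; gcongr
      _ = ε * ‖x‖ ^ 2 := by ring
  have hzero : ‖x‖ ^ 2 = 0 := by nlinarith [sq_nonneg ‖x‖]
  simpa using hzero

namespace Submodule

variable {E : Type*} [NormedAddCommGroup E] [InnerProductSpace ℝ E]

theorem disjoint_orthogonal_range_of_norm_sub_le {F : Submodule ℝ E} {φ : F →ₗ[ℝ] E}
    {ε : ℝ} (hε : ε < 1) (hφ : ∀ e : F, ‖φ e - (e : E)‖ ≤ ε * ‖(e : E)‖) :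
    Disjoint F (LinearMap.range φ)ᗮ := by
  rw [disjoint_def]
  intro x hxF hxK
  exact eq_zero_of_inner_eq_zero_of_norm_sub_le hε (hφ ⟨x, hxF⟩)
    (hxK _ (LinearMap.mem_range_self φ _))

/-- Restricted to `F`, the projection onto `K` is injective by disjointness, hence bijective
by the dimension count; so every `v` agrees modulo `Kᗮ` with some element of `F`. -/
theorem isCompl_orthogonal_of_disjoint_of_finrank_le {F K : Submodule ℝ E} [FiniteDimensional ℝ K]
    (hdisj : Disjoint F Kᗮ) (hrank : Module.finrank ℝ K ≤ Module.finrank ℝ F) :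
    IsCompl F Kᗮ := by
  set L : F →ₗ[ℝ] K := K.orthogonalProjectionOnto.toLinearMap ∘ₗ F.subtype
  have hL_inj : Function.Injective L := by
    rw [← LinearMap.ker_eq_bot, eq_bot_iff]
    intro e he
    have hmem : (e : E) ∈ Kᗮ := orthogonalProjectionOnto_eq_zero_iff.mp he
    simpa using (disjoint_def.mp hdisj) e e.2 hmem
  have : FiniteDimensional ℝ F := Module.Finite.of_injective L hL_inj
  have hL_surj : Function.Surjective L :=
    (LinearMap.injective_iff_surjective_of_finrank_eq_finrank
      (le_antisymm (LinearMap.finrank_le_finrank_of_injective hL_inj) hrank)).mp hL_inj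
  refine ⟨hdisj, codisjoint_iff.mpr (eq_top_iff'.mpr fun v ↦ ?_)⟩
  obtain ⟨f, hf⟩ := hL_surj (K.orthogonalProjectionOnto v)
  have hsub : v - f ∈ Kᗮ := by
    rw [← orthogonalProjectionOnto_eq_zero_iff, map_sub, sub_eq_zero]
    exact hf.symm
  exact mem_sup.mpr ⟨f, f.2, v - f, hsub, add_sub_cancel _ _⟩

end Submodule

theorem perturbed_subspace_complement_general
    {H : Type*} [NormedAddCommGroup H] [InnerProductSpace ℝ H]
    (F : Submodule ℝ H) [FiniteDimensional ℝ F]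
    (φ : F →ₗ[ℝ] H)
    (ε : ℝ) (hε1 : ε < 1)
    (hφ : ∀ e : F, ‖φ e - (e : H)‖ ≤ ε * ‖(e : H)‖) :
    F ⊓ (LinearMap.range φ)ᗮ = ⊥ ∧ IsCompl F (LinearMap.range φ)ᗮ := by
  have hdisj := Submodule.disjoint_orthogonal_range_of_norm_sub_le hε1 hφ
  exact ⟨disjoint_iff.mp hdisj,
    Submodule.isCompl_orthogonal_of_disjoint_of_finrank_le hdisj (LinearMap.finrank_range_le φ)⟩

/-- If `F` is a finite-dimensional subspace of a real Hilbert space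
`H` and `φ : F → H` is a linear map with `‖φ e − e‖ ≤ ε ‖e‖` for all `e ∈ F`, where
`0 ≤ ε < 1`, then `F` meets the orthogonal complement of `φ(F)` trivially, and in fact
`F` and `(φ(F))ᗮ` are complementary subspaces of `H`. -/
theorem perturbed_subspace_complement
    {H : Type*} [NormedAddCommGroup H] [InnerProductSpace ℝ H] [CompleteSpace H]
    (F : Submodule ℝ H) [FiniteDimensional ℝ F]
    (φ : F →ₗ[ℝ] H)
    (ε : ℝ) (hε0 : 0 ≤ ε) (hε1 : ε < 1)
    (hφ : ∀ e : F, ‖φ e - (e : H)‖ ≤ ε * ‖(e : H)‖) :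
    F ⊓ (LinearMap.range φ)ᗮ = ⊥ ∧ IsCompl F (LinearMap.range φ)ᗮ :=
  perturbed_subspace_complement_general F φ ε hε1 hφ
end
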